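/- arXiv:2010.10053 — 2 statements merged into one kernel-verified Lean document; each statement's English description precedes it below -/
import Mathlib

section
/- Let g ≥ 2 and 1 ≤ k ≤ g−1 be integers and let δ_1, …, δ_g be positive integers with δ_i dividing δ_{i+1} for 1 ≤ i ≤ g−1. Then, as real numbers, (g! · ∏_{i=g−k+1}^{g} δ_i)/(g−k)! > (g! · ∏_{i=1}^{g} δ_i)^{k/g}, where the right-hand side is a real power with exponent k/g. -/
/-!
Put `n = g - k`. A divisibility chain of positive integers is monotone, so the `n` smallest
`δ_i` are at most `δ_{n+1}` and the `k` largest at least `δ_{n+1}`; this gives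
`(δ_1⋯δ_g)^k ≤ (δ_{n+1}⋯δ_g)^g`. For the factorials, `n! < (n+1)^n` and `n! (n+1)^k ≤ g!`
give `(n!)^g < (g!)^n`. Raised to the `g`-th power, the claim is the product of these two
inequalities.
-/

open Finset Nat

theorem Finset.prod_pow_card_le_prod_pow_card {ι M : Type*} [CommMonoid M] [LinearOrder M]
    [IsOrderedMonoid M] {s t : Finset ι} {f : ι → M} (h : ∀ i ∈ s, ∀ j ∈ t, f i ≤ f j) :
    (∏ i ∈ s, f i) ^ #t ≤ (∏ j ∈ t, f j) ^ #s := by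
  rcases t.eq_empty_or_nonempty with rfl | ht
  · simp
  obtain ⟨j₀, hj₀, hmin⟩ := t.exists_min_image f ht
  calc (∏ i ∈ s, f i) ^ #t
      ≤ (f j₀ ^ #s) ^ #t := pow_le_pow_left' (s.prod_le_pow_card f _ fun i hi ↦ h i hi j₀ hj₀) _
    _ = (f j₀ ^ #t) ^ #s := by rw [← pow_mul, ← pow_mul, mul_comm]
    _ ≤ (∏ j ∈ t, f j) ^ #s := pow_le_pow_left' (t.pow_card_le_prod f _ hmin) _

theorem Finset.prod_Icc_pow_le_prod_Icc_sub_pow {M : Type*} [CommMonoid M] [LinearOrder M]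
    [IsOrderedMonoid M] {f : ℕ → M} {g k : ℕ} (hf : MonotoneOn f (Set.Icc 1 g)) (hk : k ≤ g) :
    (∏ i ∈ Icc 1 g, f i) ^ k ≤ (∏ i ∈ Icc (g - k + 1) g, f i) ^ g := by
  have hsplit : ∏ i ∈ Icc 1 g, f i = (∏ i ∈ Ioc 0 (g - k), f i) * ∏ i ∈ Ioc (g - k) g, f i := by
    rw [prod_Ioc_consecutive _ (Nat.zero_le _) (Nat.sub_le g k), ← Icc_add_one_left_eq_Ioc,
      zero_add]
  have hblocks : (∏ i ∈ Ioc 0 (g - k), f i) ^ k ≤ (∏ i ∈ Ioc (g - k) g, f i) ^ (g - k) := by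
    have := prod_pow_card_le_prod_pow_card (s := Ioc 0 (g - k)) (t := Ioc (g - k) g) (f := f)
      fun i hi j hj ↦ by
        simp only [mem_Ioc] at hi hj
        exact hf ⟨by omega, by omega⟩ ⟨by omega, hj.2⟩ (by omega)
    rwa [Nat.card_Ioc, Nat.card_Ioc, Nat.sub_sub_self hk, Nat.sub_zero] at this
  calc (∏ i ∈ Icc 1 g, f i) ^ k
      = (∏ i ∈ Ioc 0 (g - k), f i) ^ k * (∏ i ∈ Ioc (g - k) g, f i) ^ k := by
        rw [hsplit, mul_pow]
    _ ≤ (∏ i ∈ Ioc (g - k) g, f i) ^ (g - k) * (∏ i ∈ Ioc (g - k) g, f i) ^ k := by gcongr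
    _ = (∏ i ∈ Icc (g - k + 1) g, f i) ^ g := by
      rw [← pow_add, Nat.sub_add_cancel hk, Icc_add_one_left_eq_Ioc]

theorem monotoneOn_of_dvd_add_one {s : Set ℕ} (hs : s.OrdConnected) {δ : ℕ → ℕ}
    (hpos : ∀ i ∈ s, 0 < δ i) (hdvd : ∀ i ∈ s, i + 1 ∈ s → δ i ∣ δ (i + 1)) :
    MonotoneOn δ s :=
  monotoneOn_of_le_add_one hs fun i _ hi hi' ↦ Nat.le_of_dvd (hpos _ hi') (hdvd i hi hi')

theorem Nat.factorial_pow_lt_factorial_add_pow {n k : ℕ} (hn : 0 < n) (hk : 0 < k) :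
    n ! ^ (n + k) < (n + k)! ^ n := by
  have hlt : n ! < (n + 1) ^ n :=
    (factorial_le_pow n).trans_lt (Nat.pow_lt_pow_left (lt_add_one n) hn.ne')
  calc n ! ^ (n + k) = n ! ^ n * n ! ^ k := pow_add _ _ _
    _ < n ! ^ n * ((n + 1) ^ n) ^ k := by gcongr
    _ = (n ! * (n + 1) ^ k) ^ n := by rw [mul_pow, ← pow_mul, ← pow_mul, mul_comm n k]
    _ ≤ (n + k)! ^ n := by gcongr; exact factorial_mul_pow_le_factorial

theorem Real.rpow_natCast_div_lt_of_pow_lt {x y : ℝ} {k n : ℕ} (hx : 0 ≤ x) (hy : 0 ≤ y)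
    (hn : n ≠ 0) (h : x ^ k < y ^ n) : x ^ ((k : ℝ) / n) < y := by
  rw [div_eq_mul_inv, rpow_mul hx, rpow_natCast,
    rpow_inv_lt_iff_of_pos (pow_nonneg hx k) hy (by positivity), rpow_natCast]
  exact h

open Real

theorem polarization_degree_rpow_gt_general (g k : ℕ) (hk1 : 1 ≤ k) (hk2 : k ≤ g - 1)
    (δ : ℕ → ℕ) (hpos : ∀ i, 1 ≤ i → i ≤ g → 0 < δ i)
    (hdiv : ∀ i, 1 ≤ i → i ≤ g - 1 → δ i ∣ δ (i + 1)) :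
    ((Nat.factorial g : ℝ) * ∏ i ∈ Finset.Icc (g - k + 1) g, (δ i : ℝ)) /
        (Nat.factorial (g - k) : ℝ) >
      ((Nat.factorial g : ℝ) * ∏ i ∈ Finset.Icc 1 g, (δ i : ℝ)) ^ ((k : ℝ) / (g : ℝ)) := by
  have hmono : MonotoneOn δ (Set.Icc 1 g) :=
    monotoneOn_of_dvd_add_one Set.ordConnected_Icc (fun i hi ↦ hpos i hi.1 hi.2)
      fun i hi hi' ↦ hdiv i hi.1 (by grind)
  have hprod := prod_Icc_pow_le_prod_Icc_sub_pow hmono (by omega : k ≤ g)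
  have htop : 0 < ∏ i ∈ Icc (g - k + 1) g, δ i :=
    prod_pos fun i hi ↦ hpos i (by grind) (mem_Icc.1 hi).2
  have hfact : (g - k)! ^ g < g ! ^ (g - k) := by
    simpa [Nat.sub_add_cancel (by omega : k ≤ g)] using
      factorial_pow_lt_factorial_add_pow (n := g - k) (k := k) (by omega) (by omega)
  have key : (g ! * ∏ i ∈ Icc 1 g, δ i) ^ k * (g - k)! ^ g
      < (g ! * ∏ i ∈ Icc (g - k + 1) g, δ i) ^ g := by
    calc (g ! * ∏ i ∈ Icc 1 g, δ i) ^ k * (g - k)! ^ g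
        = g ! ^ k * (∏ i ∈ Icc 1 g, δ i) ^ k * (g - k)! ^ g := by ring
      _ ≤ g ! ^ k * (∏ i ∈ Icc (g - k + 1) g, δ i) ^ g * (g - k)! ^ g := by gcongr
      _ < g ! ^ k * (∏ i ∈ Icc (g - k + 1) g, δ i) ^ g * g ! ^ (g - k) := by gcongr
      _ = (g ! * ∏ i ∈ Icc (g - k + 1) g, δ i) ^ g := by
        rw [mul_pow, mul_right_comm, ← pow_add, Nat.add_sub_cancel' (by omega : k ≤ g)]
  refine rpow_natCast_div_lt_of_pow_lt (by positivity) (by positivity) (by omega) ?_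
  rw [div_pow, lt_div_iff₀ (by positivity)]
  exact_mod_cast key

/-- For `g ≥ 2`, `1 ≤ k ≤ g - 1` and positive integers `δ_1 ∣ δ_2 ∣ ⋯ ∣ δ_g`,
one has, as real numbers,
`(g! · δ_{g-k+1}⋯δ_g)/(g-k)! > (g! · δ_1⋯δ_g)^(k/g)`. -/
theorem polarization_degree_rpow_gt (g k : ℕ) (hg : 2 ≤ g) (hk1 : 1 ≤ k) (hk2 : k ≤ g - 1)
    (δ : ℕ → ℕ) (hpos : ∀ i, 1 ≤ i → i ≤ g → 0 < δ i)
    (hdiv : ∀ i, 1 ≤ i → i ≤ g - 1 → δ i ∣ δ (i + 1)) :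
    ((Nat.factorial g : ℝ) * ∏ i ∈ Finset.Icc (g - k + 1) g, (δ i : ℝ)) /
        (Nat.factorial (g - k) : ℝ) >
      ((Nat.factorial g : ℝ) * ∏ i ∈ Finset.Icc 1 g, (δ i : ℝ)) ^ ((k : ℝ) / (g : ℝ)) :=
  polarization_degree_rpow_gt_general g k hk1 hk2 δ hpos hdiv
end

section
/- Let g ≥ 1, q ≥ 1, and 1 ≤ k ≤ g be integers, and let δ_1, …, δ_g be positive integers such that q·g ≥ (g−i)·δ_i for every 1 ≤ i ≤ g. Then (q·g)^g ≥ q^k · g^k · (g−k)! · C(g−1, k−1) · ∏_{i=1}^{g−k} δ_i, where C(g−1, k−1) denotes the binomial coefficient. -/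
open Finset

lemma Nat.prod_Icc_one_sub_eq_descFactorial (n m : ℕ) :
    ∏ i ∈ Icc 1 m, (n - i) = (n - 1).descFactorial m := by
  induction m with
  | zero => simp
  | succ m ih =>
    rw [prod_Icc_succ_top (Nat.le_add_left 1 m), ih, Nat.descFactorial_succ, mul_comm]
    congr 1
    omega

lemma Nat.descFactorial_sub_eq_factorial_mul_choose {n j : ℕ} (h : j ≤ n) :
    n.descFactorial (n - j) = (n - j).factorial * n.choose j := by
  rw [Nat.descFactorial_eq_factorial_mul_choose, Nat.choose_symm h]

theorem helmke_arith_estimate_general (g q k : ℕ)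
    (hk1 : 1 ≤ k) (hk2 : k ≤ g)
    (δ : ℕ → ℕ)
    (hbound : ∀ i, 1 ≤ i → i ≤ g → q * g ≥ (g - i) * δ i) :
    (q * g) ^ g ≥
      q ^ k * g ^ k * Nat.factorial (g - k) * Nat.choose (g - 1) (k - 1) *
        ∏ i ∈ Finset.Icc 1 (g - k), δ i := by
  have hgk : g - k = (g - 1) - (k - 1) := by omega
  have hprod : ∏ i ∈ Icc 1 (g - k), ((g - i) * δ i) ≤ (q * g) ^ (g - k) := by
    simpa using prod_le_pow_card (Icc 1 (g - k)) _ (q * g) fun i hi =>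
      hbound i (mem_Icc.1 hi).1 ((mem_Icc.1 hi).2.trans (Nat.sub_le g k))
  calc q ^ k * g ^ k * Nat.factorial (g - k) * Nat.choose (g - 1) (k - 1) *
        ∏ i ∈ Icc 1 (g - k), δ i
      = (q * g) ^ k * ∏ i ∈ Icc 1 (g - k), ((g - i) * δ i) := by
        rw [prod_mul_distrib, Nat.prod_Icc_one_sub_eq_descFactorial, hgk,
          Nat.descFactorial_sub_eq_factorial_mul_choose (by omega), mul_pow]
        ring
    _ ≤ (q * g) ^ k * (q * g) ^ (g - k) := Nat.mul_le_mul_left _ hprod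
    _ = (q * g) ^ g := by rw [← pow_add, Nat.add_sub_cancel' hk2]

/-- For integers `g, q ≥ 1`, `1 ≤ k ≤ g`, and positive integers `δ_i` with
`q·g ≥ (g-i)·δ_i` for all `1 ≤ i ≤ g`, one has
`(q·g)^g ≥ q^k · g^k · (g-k)! · C(g-1, k-1) · δ_1⋯δ_{g-k}`. -/
theorem helmke_arith_estimate (g q k : ℕ) (hg : 1 ≤ g) (hq : 1 ≤ q)
    (hk1 : 1 ≤ k) (hk2 : k ≤ g)
    (δ : ℕ → ℕ) (hpos : ∀ i, 1 ≤ i → i ≤ g → 0 < δ i)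
    (hbound : ∀ i, 1 ≤ i → i ≤ g → q * g ≥ (g - i) * δ i) :
    (q * g) ^ g ≥
      q ^ k * g ^ k * Nat.factorial (g - k) * Nat.choose (g - 1) (k - 1) *
        ∏ i ∈ Finset.Icc 1 (g - k), δ i :=
  helmke_arith_estimate_general g q k hk1 hk2 δ hbound
end
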